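/- With g ~ N(0,1) independent of a₁ (where a₁ ~ N(0, 1 + λη₁²)) and f differentiable with polynomial growth, the gradient of the population loss at the origin satisfies ∂φ/∂x₁(0,0) = E[2(f(g)f'(g)a₁ − f(a₁)f'(g)a₁)] = −2(1 + λη₁²)·E[f'(a₁)]·E[f'(g)]. -/

import Mathlib

open MeasureTheory ProbabilityTheory

/-- `f` has at most polynomial growth. -/
def PolyGrowth (f : ℝ → ℝ) : Prop :=
  ∃ C : ℝ, ∃ n : ℕ, ∀ x : ℝ, |f x| ≤ C * (1 + |x|) ^ n

/-!
At `x = 0` the path `x ↦ a₁ x + √(1 - x²) g` passes through `g` with velocity `a₁`, so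
differentiating under the integral sign gives the first formula; the integrand and its
`x`-derivative are dominated near `0` by a polynomial in `|a₁| + |g|`, which is integrable
because Gaussians have moments of all orders. For the second formula, independence of `a₁` and
`g` splits both terms: `E[f(g) f'(g) a₁] = E[(f f')(g)] E[a₁] = 0`, and
`E[f(a₁) a₁ f'(g)] = E[a₁ f(a₁)] E[f'(g)]`, where Stein's lemma
`E[a₁ f(a₁)] = Var(a₁) E[f'(a₁)]` is Gaussian integration by parts.
-/

open Real Metric
open scoped NNReal

namespace PolyGrowth

lemma mul {F G : ℝ → ℝ} (hF : PolyGrowth F) (hG : PolyGrowth G) :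
    PolyGrowth fun x => F x * G x := by
  obtain ⟨C, n, hC⟩ := hF
  obtain ⟨D, k, hD⟩ := hG
  refine ⟨C * D, n + k, fun x => ?_⟩
  calc |F x * G x| = |F x| * |G x| := abs_mul _ _
    _ ≤ C * (1 + |x|) ^ n * (D * (1 + |x|) ^ k) :=
      mul_le_mul (hC x) (hD x) (abs_nonneg _) ((abs_nonneg _).trans (hC x))
    _ = C * D * (1 + |x|) ^ (n + k) := by ring

lemma sub_const (m : ℝ) : PolyGrowth fun x => x - m :=
  ⟨1 + |m|, 1, fun x => by
    have := abs_sub x m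
    nlinarith [abs_nonneg x, abs_nonneg m]⟩

lemma exists_bound_of_abs_le {F : ℝ → ℝ} (hF : PolyGrowth F) :
    ∃ C : ℝ, ∃ n : ℕ, ∀ x t, |x| ≤ t → |F x| ≤ C * (1 + t) ^ n := by
  obtain ⟨C, n, hC⟩ := hF
  have hC0 : 0 ≤ C := by simpa using (abs_nonneg _).trans (hC 0)
  exact ⟨C, n, fun x t hxt => (hC x).trans (by gcongr)⟩

end PolyGrowth

section Moments

variable {Ω : Type*} [MeasurableSpace Ω] {μ : Measure Ω} [IsFiniteMeasure μ] {X : Ω → ℝ}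

lemma integrable_one_add_abs_pow (hX : ∀ p : ℕ, MemLp X p μ) (n : ℕ) :
    Integrable (fun ω => (1 + |X ω|) ^ n) μ := by
  have h : MemLp (fun ω => 1 + ‖X ω‖) n μ := (memLp_const (1 : ℝ)).add (hX n).norm
  refine h.integrable_norm_pow'.congr (ae_of_all _ fun ω => ?_)
  simp only [Real.norm_eq_abs, abs_of_nonneg (add_nonneg zero_le_one (abs_nonneg (X ω)))]

lemma PolyGrowth.integrable_comp {F : ℝ → ℝ} (hF : PolyGrowth F) (hFm : Measurable F)
    (hX : ∀ p : ℕ, MemLp X p μ) : Integrable (fun ω => F (X ω)) μ := by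
  obtain ⟨C, n, hC⟩ := hF
  exact ((integrable_one_add_abs_pow hX n).const_mul C).mono'
    (hFm.comp_aemeasurable (hX 0).aestronglyMeasurable.aemeasurable).aestronglyMeasurable
    (ae_of_all _ fun ω => hC (X ω))

end Moments

lemma ProbabilityTheory.HasLaw.of_map_eq {Ω 𝓧 : Type*} [MeasurableSpace Ω] [MeasurableSpace 𝓧]
    {P : Measure Ω} {X : Ω → 𝓧} {ν : Measure 𝓧} [NeZero ν] (h : P.map X = ν) : HasLaw X ν P where
  aemeasurable := aemeasurable_of_map_neZero (h ▸ inferInstance)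
  map_eq := h

lemma ProbabilityTheory.HasLaw.memLp_of_gaussianReal {Ω : Type*} [MeasurableSpace Ω]
    {P : Measure Ω} {X : Ω → ℝ} {m : ℝ} {v : ℝ≥0} (hX : HasLaw X (gaussianReal m v) P) (p : ℕ) :
    MemLp X p P :=
  hX.hasGaussianLaw.memLp (by simp)

lemma PolyGrowth.integrable_gaussianPDFReal_mul {F : ℝ → ℝ} (hF : PolyGrowth F)
    (hFm : Measurable F) (m : ℝ) {v : ℝ≥0} (hv : v ≠ 0) :
    Integrable fun x => gaussianPDFReal m v x * F x := by
  have h := hF.integrable_comp hFm (μ := gaussianReal m v) (X := id)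
    (fun p => memLp_id_gaussianReal p)
  rw [gaussianReal_of_var_ne_zero _ hv, integrable_withDensity_iff_integrable_smul'
    (measurable_gaussianPDF m v) (ae_of_all _ fun _ => gaussianPDF_lt_top)] at h
  simpa [gaussianPDF, gaussianPDFReal_nonneg] using h

lemma hasDerivAt_gaussianPDFReal (m : ℝ) {v : ℝ≥0} (hv : v ≠ 0) (x : ℝ) :
    HasDerivAt (gaussianPDFReal m v) (-((x - m) / v) * gaussianPDFReal m v x) x := by
  have hv' : (v : ℝ) ≠ 0 := by exact_mod_cast hv
  have h : HasDerivAt (fun y => -(y - m) ^ 2 / (2 * v)) (-(2 * (x - m)) / (2 * v)) x := by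
    simpa using (((hasDerivAt_id x).sub_const m).pow 2).neg.div_const (2 * (v : ℝ))
  refine (h.exp.const_mul (√(2 * π * v))⁻¹).congr_deriv ?_
  simp only [gaussianPDFReal]
  field_simp

theorem stein_lemma_gaussianReal (m : ℝ) (v : ℝ≥0) {f : ℝ → ℝ} (hf : Differentiable ℝ f)
    (hf0 : PolyGrowth f) (hf1 : PolyGrowth (deriv f)) :
    ∫ x, (x - m) * f x ∂gaussianReal m v = v * ∫ x, deriv f x ∂gaussianReal m v := by
  rcases eq_or_ne v 0 with rfl | hv
  · simp [gaussianReal_zero_var]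
  have hv' : (v : ℝ) ≠ 0 := by exact_mod_cast hv
  set p := gaussianPDFReal m v
  have hp_f : Integrable fun x => p x * f x :=
    hf0.integrable_gaussianPDFReal_mul hf.continuous.measurable m hv
  have hp_f' : Integrable fun x => p x * deriv f x :=
    hf1.integrable_gaussianPDFReal_mul (measurable_deriv f) m hv
  have hp_id_f : Integrable fun x => p x * ((x - m) * f x) :=
    ((PolyGrowth.sub_const m).mul hf0).integrable_gaussianPDFReal_mul
      ((measurable_id.sub_const m).mul hf.continuous.measurable) m hv
  have hderiv : ∀ x, HasDerivAt (fun x => p x * f x)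
      (p x * deriv f x - p x * ((x - m) * f x) / v) x := fun x =>
    ((hasDerivAt_gaussianPDFReal m hv x).mul (hf x).hasDerivAt).congr_deriv (by field_simp; ring)
  -- `∫ (p f)' = 0` because both `p f` and `(p f)'` are integrable on `ℝ`.
  have h := integral_eq_zero_of_hasDerivAt_of_integrable hderiv
    (hp_f'.sub (hp_id_f.div_const _)) hp_f
  rw [integral_sub hp_f' (hp_id_f.div_const _), integral_div, sub_eq_zero] at h
  simp only [integral_gaussianReal_eq_integral_smul hv, smul_eq_mul]
  rw [h, mul_div_cancel₀ _ hv']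

lemma ProbabilityTheory.HasLaw.stein_lemma_gaussianReal {Ω : Type*} [MeasurableSpace Ω]
    {P : Measure Ω} {X : Ω → ℝ} {m : ℝ} {v : ℝ≥0} (hX : HasLaw X (gaussianReal m v) P) {f : ℝ → ℝ}
    (hf : Differentiable ℝ f) (hf0 : PolyGrowth f) (hf1 : PolyGrowth (deriv f)) :
    ∫ ω, (X ω - m) * f (X ω) ∂P = v * ∫ ω, deriv f (X ω) ∂P := by
  have h := hX.integral_comp (f := fun x => (x - m) * f x)
    ((measurable_id.sub_const m).mul hf.continuous.measurable).aestronglyMeasurable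
  have h' := hX.integral_comp (measurable_deriv f).aestronglyMeasurable
  simp only [Function.comp_def] at h h'
  rw [h, h', _root_.stein_lemma_gaussianReal m v hf hf0 hf1]

section Rotation

variable {x : ℝ} (a b : ℝ)

lemma hasDerivAt_mul_add_sqrt_one_sub_sq_mul (hx : x ^ 2 < 1) :
    HasDerivAt (fun y => a * y + √(1 - y ^ 2) * b) (a - x / √(1 - x ^ 2) * b) x := by
  have hs : √(1 - x ^ 2) ≠ 0 := (sqrt_pos.2 (by linarith)).ne'
  have h := ((hasDerivAt_id x).const_mul a).add
    ((((hasDerivAt_pow 2 x).const_sub 1).sqrt (by linarith)).mul_const b)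
  refine h.congr_deriv ?_
  field_simp
  ring

lemma abs_mul_add_sqrt_one_sub_sq_mul_le (hx : x ^ 2 ≤ 1) :
    |a * x + √(1 - x ^ 2) * b| ≤ |a| + |b| := by
  have hx1 : |x| ≤ 1 := abs_le_one_iff_mul_self_le_one.2 (by nlinarith)
  have hs1 : √(1 - x ^ 2) ≤ 1 := sqrt_le_one.2 (by nlinarith)
  calc |a * x + √(1 - x ^ 2) * b| ≤ |a| * |x| + √(1 - x ^ 2) * |b| := by
        simpa [abs_mul, abs_of_nonneg (sqrt_nonneg _)] using abs_add_le (a * x) (√(1 - x ^ 2) * b)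
    _ ≤ |a| * 1 + 1 * |b| := by gcongr
    _ = |a| + |b| := by ring

lemma abs_sub_div_sqrt_one_sub_sq_mul_le (hx : 2 * x ^ 2 ≤ 1) :
    |a - x / √(1 - x ^ 2) * b| ≤ |a| + |b| := by
  have hxs : |x| ≤ √(1 - x ^ 2) := le_sqrt_of_sq_le (by rw [sq_abs]; linarith)
  have hq : |x / √(1 - x ^ 2)| ≤ 1 := by
    rw [abs_div, abs_of_nonneg (sqrt_nonneg _)]
    exact div_le_one_of_le₀ hxs (sqrt_nonneg _)
  calc |a - x / √(1 - x ^ 2) * b| ≤ |a| + |x / √(1 - x ^ 2)| * |b| := by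
        simpa [abs_mul] using abs_sub a (x / √(1 - x ^ 2) * b)
    _ ≤ |a| + 1 * |b| := by gcongr
    _ = |a| + |b| := by ring

variable {f : ℝ → ℝ}

lemma hasDerivAt_sq_sub_comp_rotation (hf : Differentiable ℝ f) (hx : x ^ 2 < 1) :
    HasDerivAt (fun y => (f (a * y + √(1 - y ^ 2) * b) - f a) ^ 2)
      (2 * (f (a * x + √(1 - x ^ 2) * b) - f a) * deriv f (a * x + √(1 - x ^ 2) * b) *
        (a - x / √(1 - x ^ 2) * b)) x :=
  ((((hf _).hasDerivAt.comp x (hasDerivAt_mul_add_sqrt_one_sub_sq_mul a b hx)).sub_const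
    (f a)).pow 2).congr_deriv (by simp only [Function.comp_apply]; push_cast; ring)

variable {t C D : ℝ} {n k : ℕ}

lemma abs_sub_comp_rotation_le (hC : ∀ y s, |y| ≤ s → |f y| ≤ C * (1 + s) ^ n)
    (hx : x ^ 2 ≤ 1) (ht : |a| + |b| ≤ t) :
    |f (a * x + √(1 - x ^ 2) * b) - f a| ≤ 2 * C * (1 + t) ^ n := by
  have hu := hC _ t ((abs_mul_add_sqrt_one_sub_sq_mul_le a b hx).trans ht)
  have ha := hC a t (by linarith [abs_nonneg b])
  linarith [abs_sub (f (a * x + √(1 - x ^ 2) * b)) (f a)]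

lemma abs_deriv_sq_sub_comp_rotation_le (hC : ∀ y s, |y| ≤ s → |f y| ≤ C * (1 + s) ^ n)
    (hD : ∀ y s, |y| ≤ s → |deriv f y| ≤ D * (1 + s) ^ k) (hx : 2 * x ^ 2 ≤ 1)
    (ht : |a| + |b| ≤ t) :
    |2 * (f (a * x + √(1 - x ^ 2) * b) - f a) * deriv f (a * x + √(1 - x ^ 2) * b) *
        (a - x / √(1 - x ^ 2) * b)| ≤ 4 * C * D * (1 + t) ^ (n + k + 1) := by
  have h₁ := abs_sub_comp_rotation_le a b (x := x) hC (by linarith [sq_nonneg x]) ht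
  have h₂ := hD _ t
    ((abs_mul_add_sqrt_one_sub_sq_mul_le a b (x := x) (by linarith [sq_nonneg x])).trans ht)
  have h₃ : |a - x / √(1 - x ^ 2) * b| ≤ 1 + t := by
    linarith [abs_sub_div_sqrt_one_sub_sq_mul_le a b hx]
  rw [abs_mul, abs_mul, abs_mul, abs_two]
  calc 2 * |f (a * x + √(1 - x ^ 2) * b) - f a| * |deriv f (a * x + √(1 - x ^ 2) * b)| *
        |a - x / √(1 - x ^ 2) * b|
      ≤ 2 * (2 * C * (1 + t) ^ n) * (D * (1 + t) ^ k) * (1 + t) := by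
        have := (abs_nonneg _).trans h₁
        have := (abs_nonneg _).trans h₂
        gcongr
    _ = 4 * C * D * (1 + t) ^ (n + k + 1) := by ring

end Rotation

section Expectations

variable {Ω : Type*} [MeasurableSpace Ω] {μ : Measure Ω} [IsFiniteMeasure μ] {f : ℝ → ℝ}
  {a g : Ω → ℝ}

theorem hasDerivAt_integral_sq_sub_comp_rotation (hf : Differentiable ℝ f) (hf0 : PolyGrowth f)
    (hf1 : PolyGrowth (deriv f)) (ha : ∀ p : ℕ, MemLp a p μ) (hg : ∀ p : ℕ, MemLp g p μ) :
    HasDerivAt (fun x => ∫ ω, (f (a ω * x + √(1 - x ^ 2) * g ω) - f (a ω)) ^ 2 ∂μ)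
      (∫ ω, 2 * (f (g ω) - f (a ω)) * deriv f (g ω) * a ω ∂μ) 0 := by
  obtain ⟨C, n, hC⟩ := hf0.exists_bound_of_abs_le
  obtain ⟨D, k, hD⟩ := hf1.exists_bound_of_abs_le
  set T : Ω → ℝ := fun ω => ‖a ω‖ + ‖g ω‖
  have hT : ∀ p : ℕ, MemLp T p μ := fun p => (ha p).norm.add (hg p).norm
  have hT_le : ∀ ω, |a ω| + |g ω| ≤ |T ω| := fun ω => le_abs_self _
  have hball : ∀ x ∈ ball (0 : ℝ) (1 / 2), 2 * x ^ 2 ≤ 1 := fun x hx => by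
    rw [mem_ball_zero_iff, norm_eq_abs] at hx
    nlinarith [abs_nonneg x, sq_abs x]
  have ha_m := (ha 0).aestronglyMeasurable.aemeasurable
  have hg_m := (hg 0).aestronglyMeasurable.aemeasurable
  have hf_m := hf.continuous.measurable
  have hf'_m := measurable_deriv f
  have hF₀ : Integrable (fun ω => (f (a ω * 0 + √(1 - 0 ^ 2) * g ω) - f (a ω)) ^ 2) μ := by
    refine ((integrable_one_add_abs_pow hT (2 * n)).const_mul (4 * C ^ 2)).mono' (by fun_prop)
      (ae_of_all _ fun ω => ?_)
    have h := abs_sub_comp_rotation_le (a ω) (g ω) (x := 0) hC (by norm_num) (hT_le ω)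
    rw [norm_pow, norm_eq_abs, pow_mul']
    calc |f (a ω * 0 + √(1 - 0 ^ 2) * g ω) - f (a ω)| ^ 2 ≤ (2 * C * (1 + |T ω|) ^ n) ^ 2 :=
          pow_le_pow_left₀ (abs_nonneg _) h 2
      _ = 4 * C ^ 2 * ((1 + |T ω|) ^ n) ^ 2 := by ring
  have key := hasDerivAt_integral_of_dominated_loc_of_deriv_le (ball_mem_nhds 0 one_half_pos)
    (.of_forall fun x => by fun_prop) hF₀ (by fun_prop)
    (ae_of_all _ fun ω x hx =>
      abs_deriv_sq_sub_comp_rotation_le (a ω) (g ω) hC hD (hball x hx) (hT_le ω))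
    ((integrable_one_add_abs_pow hT (n + k + 1)).const_mul (4 * C * D))
    (ae_of_all _ fun ω x hx =>
      hasDerivAt_sq_sub_comp_rotation (a ω) (g ω) hf (by linarith [hball x hx, sq_nonneg x]))
  simpa using key.2

theorem integral_two_mul_sub_eq_of_indepFun {v : ℝ≥0} (ha : HasLaw a (gaussianReal 0 v) μ)
    (hg : ∀ p : ℕ, MemLp g p μ) (hind : IndepFun a g μ) (hf : Differentiable ℝ f)
    (hf0 : PolyGrowth f) (hf1 : PolyGrowth (deriv f)) :
    ∫ ω, 2 * (f (g ω) * deriv f (g ω) * a ω - f (a ω) * deriv f (g ω) * a ω) ∂μ =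
      -2 * v * (∫ ω, deriv f (a ω) ∂μ) * ∫ ω, deriv f (g ω) ∂μ := by
  have ha_m := ha.aemeasurable
  have hg_m := (hg 0).aestronglyMeasurable.aemeasurable
  have hf_m := hf.continuous.measurable
  have hff'_m : Measurable fun y => f y * deriv f y := hf_m.mul (measurable_deriv f)
  have hidf_m : Measurable fun x => (x - 0) * f x := (measurable_id.sub_const 0).mul hf_m
  have ha_int : Integrable a μ :=
    memLp_one_iff_integrable.1 (by exact_mod_cast ha.memLp_of_gaussianReal 1)
  have hind₁ := hind.symm.comp hff'_m measurable_id
  have hind₂ := hind.comp hidf_m (measurable_deriv f)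
  have h₁ : ∫ ω, f (g ω) * deriv f (g ω) * a ω ∂μ = 0 := by
    have h := hind.symm.integral_fun_comp_mul_comp hg_m ha_m hff'_m.aestronglyMeasurable
      aestronglyMeasurable_id (f := fun y => f y * deriv f y) (g := id)
    simp only [id] at h
    rw [h, ha.integral_eq, integral_id_gaussianReal, mul_zero]
  have h₂ : ∫ ω, f (a ω) * deriv f (g ω) * a ω ∂μ =
      v * (∫ ω, deriv f (a ω) ∂μ) * ∫ ω, deriv f (g ω) ∂μ := by
    have h := hind.integral_fun_comp_mul_comp ha_m hg_m hidf_m.aestronglyMeasurable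
      (measurable_deriv f).aestronglyMeasurable
    rw [ha.stein_lemma_gaussianReal hf hf0 hf1] at h
    rw [← h]
    exact integral_congr_ae (ae_of_all _ fun ω => by ring)
  have hint₁ : Integrable (fun ω => f (g ω) * deriv f (g ω) * a ω) μ :=
    hind₁.integrable_mul ((hf0.mul hf1).integrable_comp hff'_m hg) ha_int
  have hint₂ : Integrable (fun ω => f (a ω) * deriv f (g ω) * a ω) μ := by
    refine (hind₂.integrable_mul (((PolyGrowth.sub_const 0).mul hf0).integrable_comp hidf_m
      ha.memLp_of_gaussianReal) (hf1.integrable_comp (measurable_deriv f) hg)).congr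
      (ae_of_all _ fun ω => ?_)
    simp only [Pi.mul_apply, Function.comp_apply]
    ring
  rw [integral_const_mul, integral_sub hint₁ hint₂, h₁, h₂]
  ring

end Expectations

theorem population_loss_first_partial_general
    {Ω : Type*} [MeasureSpace Ω] (μ : Measure Ω) [IsProbabilityMeasure μ]
    (lam η₁ : ℝ) (hlam : 0 < lam)
    (f : ℝ → ℝ) (hf : Differentiable ℝ f)
    (hg0 : PolyGrowth f) (hg1 : PolyGrowth (deriv f))
    (a₁ a₂ g ε : Ω → ℝ)
    (hlaw₁ : Measure.map a₁ μ = gaussianReal 0 (Real.toNNReal (1 + lam * η₁ ^ 2)))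
    (hlawg : Measure.map g μ = gaussianReal 0 1)
    (hindepg : IndepFun (fun ω => (a₁ ω, a₂ ω)) g μ)
    (φ : ℝ × ℝ → ℝ)
    (hφ : ∀ p : ℝ × ℝ, φ p =
      (∫ ω, (f (a₁ ω * p.1 + a₂ ω * p.2 + Real.sqrt (1 - p.1 ^ 2 - p.2 ^ 2) * g ω)
          - f (a₁ ω)) ^ 2 ∂μ) + ∫ ω, (ε ω) ^ 2 ∂μ) :
    deriv (fun x₁ => φ (x₁, 0)) 0 =
      (∫ ω, 2 * (f (g ω) * deriv f (g ω) * a₁ ω - f (a₁ ω) * deriv f (g ω) * a₁ ω) ∂μ) ∧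
    (∫ ω, 2 * (f (g ω) * deriv f (g ω) * a₁ ω - f (a₁ ω) * deriv f (g ω) * a₁ ω) ∂μ) =
      -2 * (1 + lam * η₁ ^ 2) * (∫ ω, deriv f (a₁ ω) ∂μ) * (∫ ω, deriv f (g ω) ∂μ) := by
  have ha := HasLaw.of_map_eq hlaw₁
  have hg := (HasLaw.of_map_eq hlawg).memLp_of_gaussianReal
  have hind : IndepFun a₁ g μ := hindepg.comp measurable_fst measurable_id
  have hv : ((1 + lam * η₁ ^ 2).toNNReal : ℝ) = 1 + lam * η₁ ^ 2 :=
    Real.coe_toNNReal _ (add_nonneg zero_le_one (mul_nonneg hlam.le (sq_nonneg η₁)))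
  have hφ₀ : (fun x₁ => φ (x₁, 0)) = fun x =>
      (∫ ω, (f (a₁ ω * x + √(1 - x ^ 2) * g ω) - f (a₁ ω)) ^ 2 ∂μ) + ∫ ω, ε ω ^ 2 ∂μ := by
    funext x
    simp [hφ]
  refine ⟨?_, by rw [integral_two_mul_sub_eq_of_indepFun ha hg hind hf hg0 hg1, hv]⟩
  rw [hφ₀, ((hasDerivAt_integral_sq_sub_comp_rotation hf hg0 hg1 ha.memLp_of_gaussianReal
    hg).add_const _).deriv]
  exact integral_congr_ae (ae_of_all _ fun ω => by ring)

/-- First partial derivative of the population loss at the origin: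
`∂φ/∂x₁(0,0) = E[2(f(g)f'(g)a₁ − f(a₁)f'(g)a₁)] = −2(1+λη₁²)·E[f'(a₁)]·E[f'(g)]`. -/
theorem population_loss_first_partial
    {Ω : Type*} [MeasureSpace Ω] (μ : Measure Ω) [IsProbabilityMeasure μ]
    (lam η₁ η₂ : ℝ) (hlam : 0 < lam) (hη₁ : η₁ ∈ Set.Icc (0 : ℝ) 1)
    (hη₂ : η₂ = Real.sqrt (1 - η₁ ^ 2))
    (f : ℝ → ℝ) (hf : Differentiable ℝ f) (hf' : Differentiable ℝ (deriv f))
    (hg0 : PolyGrowth f) (hg1 : PolyGrowth (deriv f)) (hg2 : PolyGrowth (deriv (deriv f)))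
    (a₁ a₂ g ε W : Ω → ℝ)
    (hlaw₁ : Measure.map a₁ μ = gaussianReal 0 (Real.toNNReal (1 + lam * η₁ ^ 2)))
    (hlawW : Measure.map W μ = gaussianReal 0 1)
    (hlawg : Measure.map g μ = gaussianReal 0 1)
    (hindep₁W : IndepFun a₁ W μ)
    (hindepg : IndepFun (fun ω => (a₁ ω, a₂ ω)) g μ)
    (hdecomp : ∀ ω, a₂ ω = (lam * η₁ * η₂ / (1 + lam * η₁ ^ 2)) * a₁ ω +
      Real.sqrt (1 + lam * η₂ ^ 2 - (lam * η₁ * η₂) ^ 2 / (1 + lam * η₁ ^ 2)) * W ω)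
    (hεint : Integrable (fun ω => (ε ω) ^ 2) μ)
    (φ : ℝ × ℝ → ℝ)
    (hφ : ∀ p : ℝ × ℝ, φ p =
      (∫ ω, (f (a₁ ω * p.1 + a₂ ω * p.2 + Real.sqrt (1 - p.1 ^ 2 - p.2 ^ 2) * g ω)
          - f (a₁ ω)) ^ 2 ∂μ) + ∫ ω, (ε ω) ^ 2 ∂μ) :
    deriv (fun x₁ => φ (x₁, 0)) 0 =
      (∫ ω, 2 * (f (g ω) * deriv f (g ω) * a₁ ω - f (a₁ ω) * deriv f (g ω) * a₁ ω) ∂μ) ∧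
    (∫ ω, 2 * (f (g ω) * deriv f (g ω) * a₁ ω - f (a₁ ω) * deriv f (g ω) * a₁ ω) ∂μ) =
      -2 * (1 + lam * η₁ ^ 2) * (∫ ω, deriv f (a₁ ω) ∂μ) * (∫ ω, deriv f (g ω) ∂μ) :=
  population_loss_first_partial_general μ lam η₁ hlam f hf hg0 hg1 a₁ a₂ g ε hlaw₁ hlawg hindepg φ
    hφ
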